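/- arXiv:2306.17352 — 3 statements merged into one kernel-verified Lean document; each statement's English description precedes it below -/
import Mathlib

section
/- Let V(n) = S(n)1_n be the left ideal of S(n) generated by 1_n, regarded as a left S(n)-module. The elements x_a = F^a 1_n for 0 ≤ a ≤ n form a k-basis of V(n), so dim_k V(n) = n+1. Moreover F x_a = x_{a+1} for a < n, F x_n = 0, E x_a = [n−a+1][a] x_{a−1} for a > 0, E x_0 = 0, and 1_i x_a = δ_{i,n−2a} x_a for all i ∈ X(n) and 0 ≤ a ≤ n. If in addition [n]! ≠ 0 in k, then V(n) is a simple S(n)-module. -/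
noncomputable section

open scoped TensorProduct

/-- Balanced quantum integer `[m]` for a natural number `m`. -/
def qintN {k : Type*} [Field k] (v : k) (m : ℕ) : k :=
  ∑ t ∈ Finset.range m, v ^ ((m : ℤ) - 1 - 2 * t)

/-- Balanced quantum integer `[m]` for an integer `m`. -/
def qint {k : Type*} [Field k] (v : k) (m : ℤ) : k :=
  if 0 ≤ m then qintN v m.toNat else - qintN v (-m).toNat

/-- Quantum factorial `[m]! = [1][2]⋯[m]`. -/
def qfact {k : Type*} [Field k] (v : k) (m : ℕ) : k :=
  ∏ j ∈ Finset.range m, qintN v (j + 1)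

/-- `X(n) = {i ∈ ℤ : |i| ≤ n, i ≡ n (mod 2)}`. -/
def Xset (n : ℕ) : Finset ℤ :=
  (Finset.Icc (-(n : ℤ)) (n : ℤ)).filter (fun i => i % 2 = (n : ℤ) % 2)

/-- Generators of the quantum Schur algebra: `E`, `F`, and the idempotents
`1_i` (the latter indexed by all integers; those outside `X(n)` are set to
zero by the relations). -/
inductive SchurGen : Type
  | E : SchurGen
  | F : SchurGen
  | unit : ℤ → SchurGen

variable (k : Type*) [Field k]

/-- The defining relations of the quantum Schur algebra `S(n)`. -/
inductive SchurRel (v : k) (n : ℕ) :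
    FreeAlgebra k SchurGen → FreeAlgebra k SchurGen → Prop
  | idem : ∀ i ∈ Xset n, ∀ j ∈ Xset n,
      SchurRel v n
        (FreeAlgebra.ι k (SchurGen.unit i) * FreeAlgebra.ι k (SchurGen.unit j))
        (if i = j then FreeAlgebra.ι k (SchurGen.unit i) else 0)
  | sum_one : SchurRel v n (∑ i ∈ Xset n, FreeAlgebra.ι k (SchurGen.unit i)) 1
  | unit_zero : ∀ i ∉ Xset n, SchurRel v n (FreeAlgebra.ι k (SchurGen.unit i)) 0
  | comm : SchurRel v n
      (FreeAlgebra.ι k SchurGen.E * FreeAlgebra.ι k SchurGen.F -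
        FreeAlgebra.ι k SchurGen.F * FreeAlgebra.ι k SchurGen.E)
      (∑ i ∈ Xset n, qint v i • FreeAlgebra.ι k (SchurGen.unit i))
  | Eu (i : ℤ) : SchurRel v n
      (FreeAlgebra.ι k SchurGen.E * FreeAlgebra.ι k (SchurGen.unit i))
      (FreeAlgebra.ι k (SchurGen.unit (i + 2)) * FreeAlgebra.ι k SchurGen.E)
  | Fu (i : ℤ) : SchurRel v n
      (FreeAlgebra.ι k SchurGen.F * FreeAlgebra.ι k (SchurGen.unit i))
      (FreeAlgebra.ι k (SchurGen.unit (i - 2)) * FreeAlgebra.ι k SchurGen.F)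
  | uE (i : ℤ) : SchurRel v n
      (FreeAlgebra.ι k (SchurGen.unit i) * FreeAlgebra.ι k SchurGen.E)
      (FreeAlgebra.ι k SchurGen.E * FreeAlgebra.ι k (SchurGen.unit (i - 2)))
  | uF (i : ℤ) : SchurRel v n
      (FreeAlgebra.ι k (SchurGen.unit i) * FreeAlgebra.ι k SchurGen.F)
      (FreeAlgebra.ι k SchurGen.F * FreeAlgebra.ι k (SchurGen.unit (i + 2)))

/-- The quantum Schur algebra `S(n)`, presented by generators and relations. -/
abbrev SchurAlg (v : k) (n : ℕ) := RingQuot (SchurRel k v n)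

/-- The generator `E` of `S(n)`. -/
def SE (v : k) (n : ℕ) : SchurAlg k v n :=
  RingQuot.mkAlgHom k (SchurRel k v n) (FreeAlgebra.ι k SchurGen.E)

/-- The generator `F` of `S(n)`. -/
def SF (v : k) (n : ℕ) : SchurAlg k v n :=
  RingQuot.mkAlgHom k (SchurRel k v n) (FreeAlgebra.ι k SchurGen.F)

/-- The generator `1_i` of `S(n)`. -/
def Sunit (v : k) (n : ℕ) (i : ℤ) : SchurAlg k v n :=
  RingQuot.mkAlgHom k (SchurRel k v n) (FreeAlgebra.ι k (SchurGen.unit i))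

/-!
The vectors `x_a = F^a 1_n` span a left ideal, since the relations give `F x_a = x_{a+1}`,
`1_i x_a = δ_{i,n-2a} x_a` and, by induction on `a` from `EF = FE + Σ [i] 1_i`,
`E x_a = [n-a+1][a] x_{a-1}`; the inductive step is the identity
`[n-a+1][a] + [n-2a] = [n-a][a+1]`. They are linearly independent because the same formulas
define an action of `S(n)` on `k^{n+1}` in which `x_a e_0 = e_a`. If `[n]! ≠ 0`, a nonzero
`w = Σ c_a x_a` with `c_a ≠ 0` is sent by `E^a 1_{n-2a}` to a nonzero multiple of `1_n`,
so `w` generates `S(n) 1_n`.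
-/

lemma Ideal.isSimpleModule_span_singleton {R : Type*} [Ring R] {e : R} (he : e ≠ 0)
    (h : ∀ w ∈ Ideal.span {e}, w ≠ 0 → ∃ s, s * w = e) :
    IsSimpleModule R (Ideal.span {e}) := by
  refine isSimpleModule_iff_toSpanSingleton_surjective.mpr
    ⟨⟨⟨e, Ideal.mem_span_singleton_self e⟩, 0, by simpa using he⟩, fun x hx z => ?_⟩
  obtain ⟨s, hs⟩ := h x x.2 (by simpa using hx)
  obtain ⟨t, ht⟩ := Ideal.mem_span_singleton'.mp z.2
  exact ⟨t * s, Subtype.ext (by simp [mul_assoc, hs, ht])⟩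

variable {k}

section QuantumInteger

variable (v : k)

lemma qint_natCast (m : ℕ) : qint v m = qintN v m := by
  simp [qint]

lemma qint_zero : qint v 0 = 0 := by
  simp [qint, qintN]

lemma qint_neg (m : ℤ) : qint v (-m) = -qint v m := by
  rcases lt_trichotomy m 0 with h | rfl | h
  · simp [qint, h.le, h.not_ge]
  · simp [qint_zero]
  · simp [qint, h.le, h.not_ge]

variable {v}

lemma zpow_mul_qintN (hv : v ≠ 0) (e : ℤ) (m : ℕ) :
    v ^ e * qintN v m = ∑ t ∈ Finset.range m, v ^ (e + m - 1 - 2 * t) := by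
  rw [qintN, Finset.mul_sum]
  refine Finset.sum_congr rfl fun t _ => ?_
  rw [← zpow_add₀ hv]
  ring_nf

lemma qintN_succ (hv : v ≠ 0) (m : ℕ) :
    qintN v (m + 1) = v ^ (m : ℤ) + v⁻¹ * qintN v m := by
  rw [← zpow_neg_one, zpow_mul_qintN hv, qintN, Finset.sum_range_succ', add_comm]
  congr 1
  · congr 1; push_cast; ring
  · refine Finset.sum_congr rfl fun t _ => ?_
    congr 1; push_cast; ring

lemma zpow_mul_qintN_sub_zpow_mul_qintN_of_le (hv : v ≠ 0) {a x : ℕ} (hax : a ≤ x) :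
    v ^ (a : ℤ) * qintN v x - v ^ (x : ℤ) * qintN v a = qintN v (x - a) := by
  obtain ⟨d, rfl⟩ := Nat.exists_eq_add_of_le hax
  rw [zpow_mul_qintN hv, zpow_mul_qintN hv, Finset.sum_range_add, add_comm (((a + d : ℕ) : ℤ)),
    add_sub_cancel_left, Nat.add_sub_cancel_left, qintN]
  refine Finset.sum_congr rfl fun t _ => ?_
  congr 1; push_cast; ring

lemma zpow_mul_qintN_sub_zpow_mul_qintN (hv : v ≠ 0) (x a : ℕ) :
    v ^ (a : ℤ) * qintN v x - v ^ (x : ℤ) * qintN v a = qint v ((x : ℤ) - a) := by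
  rcases le_total a x with h | h
  · rw [zpow_mul_qintN_sub_zpow_mul_qintN_of_le hv h, ← qint_natCast, Nat.cast_sub h]
  · rw [← neg_sub (a : ℤ), qint_neg, ← Nat.cast_sub h, qint_natCast,
      ← zpow_mul_qintN_sub_zpow_mul_qintN_of_le hv h]
    ring

lemma qintN_mul_qintN_succ_sub (hv : v ≠ 0) (x a : ℕ) :
    qintN v x * qintN v (a + 1) - qintN v (x + 1) * qintN v a = qint v ((x : ℤ) - a) := by
  rw [qintN_succ hv, qintN_succ hv, ← zpow_mul_qintN_sub_zpow_mul_qintN hv]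
  ring

end QuantumInteger

section SchurCoeff

variable {v : k} {n : ℕ}

variable (v n) in
def schurCoeff (a : ℕ) : k := qint v ((n : ℤ) - a + 1) * qint v a

@[simp]
lemma schurCoeff_zero : schurCoeff v n 0 = 0 := by
  simp [schurCoeff, qint_zero]

lemma schurCoeff_succ_self : schurCoeff v n (n + 1) = 0 := by
  simp [schurCoeff, qint_zero]

lemma schurCoeff_succ (hv : v ≠ 0) {a : ℕ} (ha : a ≤ n) :
    schurCoeff v n (a + 1) = schurCoeff v n a + qint v ((n : ℤ) - 2 * a) := by
  have h := qintN_mul_qintN_succ_sub hv (n - a) a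
  rw [Nat.cast_sub ha, show (n : ℤ) - a - a = n - 2 * a by ring] at h
  simp only [schurCoeff]
  rw [show (n : ℤ) - ↑(a + 1) + 1 = ↑(n - a) by omega,
    show (n : ℤ) - a + 1 = ↑(n - a + 1) by omega, qint_natCast, qint_natCast, qint_natCast,
    qint_natCast, ← h]
  ring

lemma qintN_ne_zero_of_qfact_ne_zero (hfact : qfact v n ≠ 0) {j : ℕ} (hj : 0 < j)
    (hjn : j ≤ n) :
    qintN v j ≠ 0 := by
  obtain ⟨i, rfl⟩ := Nat.exists_eq_add_of_lt hj
  rw [zero_add]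
  exact Finset.prod_ne_zero_iff.mp hfact i (Finset.mem_range.mpr (by omega))

lemma schurCoeff_ne_zero (hfact : qfact v n ≠ 0) {a : ℕ} (ha : 0 < a) (han : a ≤ n) :
    schurCoeff v n a ≠ 0 := by
  rw [schurCoeff, show (n : ℤ) - a + 1 = ↑(n - a + 1) by omega, qint_natCast, qint_natCast]
  exact mul_ne_zero (qintN_ne_zero_of_qfact_ne_zero hfact (by omega) (by omega))
    (qintN_ne_zero_of_qfact_ne_zero hfact ha han)

end SchurCoeff

lemma mem_Xset_iff {n : ℕ} {i : ℤ} :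
    i ∈ Xset n ↔ -(n : ℤ) ≤ i ∧ i ≤ n ∧ i % 2 = (n : ℤ) % 2 := by
  simp [Xset, and_assoc]

lemma sub_two_mul_mem_Xset {n a : ℕ} (ha : a ≤ n) : (n : ℤ) - 2 * a ∈ Xset n :=
  mem_Xset_iff.mpr (by omega)

section Relations

variable (v : k) (n : ℕ)

lemma Sunit_eq_zero {i : ℤ} (hi : i ∉ Xset n) : Sunit k v n i = 0 := by
  simpa [Sunit] using RingQuot.mkAlgHom_rel k (SchurRel.unit_zero (v := v) i hi)

lemma Sunit_mul_Sunit (i j : ℤ) :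
    Sunit k v n i * Sunit k v n j = if i = j then Sunit k v n i else 0 := by
  by_cases hi : i ∈ Xset n
  · by_cases hj : j ∈ Xset n
    · have := RingQuot.mkAlgHom_rel k (SchurRel.idem (v := v) i hi j hj)
      rwa [map_mul, apply_ite (RingQuot.mkAlgHom k _), map_zero] at this
    · split_ifs with h
      · rw [← h, Sunit_eq_zero v n (h ▸ hj), zero_mul]
      · rw [Sunit_eq_zero v n hj, mul_zero]
  · simp [Sunit_eq_zero v n hi]

lemma SE_mul_Sunit (i : ℤ) : SE k v n * Sunit k v n i = Sunit k v n (i + 2) * SE k v n := by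
  simpa [SE, Sunit] using RingQuot.mkAlgHom_rel k (SchurRel.Eu (v := v) (n := n) i)

lemma SF_mul_Sunit (i : ℤ) : SF k v n * Sunit k v n i = Sunit k v n (i - 2) * SF k v n := by
  simpa [SF, Sunit] using RingQuot.mkAlgHom_rel k (SchurRel.Fu (v := v) (n := n) i)

lemma SE_mul_SF :
    SE k v n * SF k v n = SF k v n * SE k v n + ∑ i ∈ Xset n, qint v i • Sunit k v n i := by
  have h := RingQuot.mkAlgHom_rel k (SchurRel.comm (v := v) (n := n))
  simp only [map_sub, map_mul, map_sum, map_smul] at h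
  exact sub_eq_iff_eq_add'.mp h

lemma SF_pow_mul_Sunit (a : ℕ) (i : ℤ) :
    SF k v n ^ a * Sunit k v n i = Sunit k v n (i - 2 * a) * SF k v n ^ a := by
  induction a with
  | zero => simp
  | succ a ih =>
    rw [pow_succ', mul_assoc, ih, ← mul_assoc, SF_mul_Sunit, mul_assoc, ← pow_succ']
    congr 2
    push_cast; ring

end Relations

section WeightVectors

variable {v : k} {n : ℕ}

variable (v n) in
def weightVec (a : ℕ) : SchurAlg k v n := SF k v n ^ a * Sunit k v n n

@[simp]
lemma weightVec_zero : weightVec v n 0 = Sunit k v n n := by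
  rw [weightVec, pow_zero, one_mul]

lemma Sunit_mul_weightVec_self (a : ℕ) :
    Sunit k v n (n - 2 * a) * weightVec v n a = weightVec v n a := by
  rw [weightVec, ← mul_assoc, ← SF_pow_mul_Sunit, mul_assoc, Sunit_mul_Sunit, if_pos rfl]

lemma Sunit_mul_weightVec (i : ℤ) (a : ℕ) :
    Sunit k v n i * weightVec v n a = if i = n - 2 * a then weightVec v n a else 0 := by
  conv_lhs => rw [← Sunit_mul_weightVec_self a, ← mul_assoc, Sunit_mul_Sunit]
  split_ifs with h
  · rw [h, Sunit_mul_weightVec_self]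
  · rw [zero_mul]

lemma weightVec_eq_zero {a : ℕ} (ha : n < a) : weightVec v n a = 0 := by
  rw [← Sunit_mul_weightVec_self, Sunit_eq_zero v n (by rw [mem_Xset_iff]; omega), zero_mul]

lemma SF_mul_weightVec (a : ℕ) : SF k v n * weightVec v n a = weightVec v n (a + 1) := by
  rw [weightVec, weightVec, pow_succ', mul_assoc]

lemma SE_mul_weightVec (hv : v ≠ 0) {a : ℕ} (ha : a ≤ n) :
    SE k v n * weightVec v n a = schurCoeff v n a • weightVec v n (a - 1) := by
  induction a with
  | zero =>
    rw [weightVec_zero, SE_mul_Sunit, Sunit_eq_zero v n (by rw [mem_Xset_iff]; omega)]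
    simp
  | succ a ih =>
    have hsum : (∑ i ∈ Xset n, qint v i • Sunit k v n i) * weightVec v n a =
        qint v (n - 2 * a) • weightVec v n a := by
      simp_rw [Finset.sum_mul, smul_mul_assoc, Sunit_mul_weightVec, smul_ite, smul_zero]
      rw [Finset.sum_ite_eq', if_pos (sub_two_mul_mem_Xset (by omega))]
    rw [← SF_mul_weightVec, ← mul_assoc, SE_mul_SF, add_mul, hsum, mul_assoc, ih (by omega),
      mul_smul_comm, schurCoeff_succ hv (by omega), add_smul, Nat.add_sub_cancel]
    rcases Nat.eq_zero_or_pos a with rfl | hpos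
    · simp
    · rw [SF_mul_weightVec, Nat.sub_add_cancel hpos]

lemma SE_pow_mul_weightVec (hv : v ≠ 0) {a : ℕ} (ha : a ≤ n) :
    SE k v n ^ a * weightVec v n a =
      (∏ j ∈ Finset.range a, schurCoeff v n (j + 1)) • Sunit k v n n := by
  induction a with
  | zero => simp
  | succ a ih =>
    rw [pow_succ, mul_assoc, SE_mul_weightVec hv ha, Nat.add_sub_cancel, mul_smul_comm,
      ih (by omega), smul_smul, Finset.prod_range_succ, mul_comm]

end WeightVectors

section LeftIdeal

variable {v : k} {n : ℕ}

@[elab_as_elim]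
lemma SchurAlg.induction {P : SchurAlg k v n → Prop} (scalar : ∀ r, P (algebraMap k _ r))
    (E : P (SE k v n)) (F : P (SF k v n)) (unit : ∀ i, P (Sunit k v n i))
    (add : ∀ s t, P s → P t → P (s + t)) (mul : ∀ s t, P s → P t → P (s * t))
    (s : SchurAlg k v n) :
    P s := by
  obtain ⟨p, rfl⟩ := RingQuot.mkAlgHom_surjective k (SchurRel k v n) s
  induction p using FreeAlgebra.induction with
  | grade0 r => simpa only [AlgHom.commutes] using scalar r
  | grade1 g => cases g <;> first | exact E | exact F | exact unit _
  | mul p q hp hq => simpa only [map_mul] using mul _ _ hp hq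
  | add p q hp hq => simpa only [map_add] using add _ _ hp hq

variable (v n) in
def weightSpan : Submodule k (SchurAlg k v n) :=
  Submodule.span k (Set.range fun a : Fin (n + 1) => weightVec v n a)

lemma weightVec_mem_weightSpan {a : ℕ} (ha : a ≤ n) : weightVec v n a ∈ weightSpan v n :=
  Submodule.subset_span ⟨⟨a, by omega⟩, rfl⟩

lemma mul_mem_weightSpan (hv : v ≠ 0) (s : SchurAlg k v n) {w : SchurAlg k v n}
    (hw : w ∈ weightSpan v n) : s * w ∈ weightSpan v n := by
  revert w
  show weightSpan v n ≤ (weightSpan v n).comap (LinearMap.mulLeft k s)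
  induction s using SchurAlg.induction with
  | scalar r =>
    intro w hw
    simpa [Algebra.algebraMap_eq_smul_one] using (weightSpan v n).smul_mem r hw
  | E =>
    refine Submodule.span_le.mpr (Set.range_subset_iff.mpr fun a => ?_)
    simpa [SE_mul_weightVec hv (Nat.lt_succ_iff.mp a.2)] using
      (weightSpan v n).smul_mem _ (weightVec_mem_weightSpan (by omega))
  | F =>
    refine Submodule.span_le.mpr (Set.range_subset_iff.mpr fun a => ?_)
    rcases Nat.lt_or_ge (a : ℕ) n with h | h
    · simpa [SF_mul_weightVec] using weightVec_mem_weightSpan (v := v) h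
    · simp [SF_mul_weightVec, weightVec_eq_zero (show n < a + 1 by omega)]
  | unit i =>
    refine Submodule.span_le.mpr (Set.range_subset_iff.mpr fun a => ?_)
    simp only [SetLike.mem_coe, Submodule.mem_comap, LinearMap.mulLeft_apply,
      Sunit_mul_weightVec]
    split_ifs
    · exact weightVec_mem_weightSpan (Nat.lt_succ_iff.mp a.2)
    · exact zero_mem _
  | add s t hs ht =>
    intro w hw
    simpa [add_mul] using add_mem (Submodule.mem_comap.mp (hs hw)) (Submodule.mem_comap.mp (ht hw))
  | mul s t hs ht =>
    intro w hw
    simpa [mul_assoc] using hs (ht hw)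

lemma restrictScalars_span_Sunit (hv : v ≠ 0) :
    (Ideal.span {Sunit k v n n}).restrictScalars k = weightSpan v n := by
  apply le_antisymm
  · intro w hw
    obtain ⟨s, rfl⟩ := Ideal.mem_span_singleton'.mp hw
    exact mul_mem_weightSpan hv s (by simpa using weightVec_mem_weightSpan (v := v) (n.zero_le))
  · refine Submodule.span_le.mpr (Set.range_subset_iff.mpr fun a => ?_)
    exact Ideal.mem_span_singleton'.mpr ⟨_, rfl⟩

end LeftIdeal

section Representation

variable {v : k} {n : ℕ}

-- Indexed by `ℕ` and zero beyond `n`, so that `F e_a = e_{a+1}` holds also for `a = n`.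
variable (k n) in
def stdVec (a : ℕ) : Fin (n + 1) → k := fun b => if (b : ℕ) = a then 1 else 0

lemma stdVec_val (a : Fin (n + 1)) : stdVec k n a = Pi.basisFun k (Fin (n + 1)) a := by
  ext b
  simp [stdVec, Pi.single_apply, Fin.ext_iff]

lemma stdVec_eq_zero {a : ℕ} (ha : n < a) : stdVec k n a = 0 := by
  ext b
  simp only [stdVec, Pi.zero_apply, ite_eq_right_iff]
  omega

lemma constr_stdVec {M : Type*} [AddCommGroup M] [Module k M] {g : ℕ → M}
    (hg : ∀ a, n < a → g a = 0) (a : ℕ) :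
    (Pi.basisFun k (Fin (n + 1))).constr k (fun b => g b) (stdVec k n a) = g a := by
  rcases Nat.lt_or_ge n a with h | h
  · rw [stdVec_eq_zero h, map_zero, hg a h]
  · rw [show a = ((⟨a, by omega⟩ : Fin (n + 1)) : ℕ) from rfl, stdVec_val,
      Module.Basis.constr_basis]

lemma ext_stdVec {f g : Module.End k (Fin (n + 1) → k)}
    (h : ∀ a ≤ n, f (stdVec k n a) = g (stdVec k n a)) : f = g :=
  (Pi.basisFun k (Fin (n + 1))).ext fun a => by
    simpa only [stdVec_val] using h a (Nat.lt_succ_iff.mp a.2)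

variable (v n) in
def repE : Module.End k (Fin (n + 1) → k) :=
  (Pi.basisFun k (Fin (n + 1))).constr k fun b => schurCoeff v n b • stdVec k n (b - 1)

variable (k n) in
def repF : Module.End k (Fin (n + 1) → k) :=
  (Pi.basisFun k (Fin (n + 1))).constr k fun b => stdVec k n (b + 1)

variable (k n) in
def repUnit (i : ℤ) : Module.End k (Fin (n + 1) → k) :=
  (Pi.basisFun k (Fin (n + 1))).constr k fun b => if i = n - 2 * (b : ℕ) then stdVec k n b else 0

lemma repE_stdVec (a : ℕ) :
    repE v n (stdVec k n a) = schurCoeff v n a • stdVec k n (a - 1) := by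
  refine constr_stdVec (g := fun a => schurCoeff v n a • stdVec k n (a - 1)) (fun a ha => ?_) a
  rcases (Nat.succ_le_of_lt ha).eq_or_lt with rfl | h
  · rw [schurCoeff_succ_self, zero_smul]
  · rw [stdVec_eq_zero (by omega), smul_zero]

lemma repF_stdVec (a : ℕ) : repF k n (stdVec k n a) = stdVec k n (a + 1) :=
  constr_stdVec (g := fun a => stdVec k n (a + 1)) (fun _ ha => stdVec_eq_zero (by omega)) a

lemma repUnit_stdVec (i : ℤ) (a : ℕ) :
    repUnit k n i (stdVec k n a) = if i = n - 2 * a then stdVec k n a else 0 :=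
  constr_stdVec (g := fun a => if i = n - 2 * (a : ℕ) then stdVec k n a else 0)
    (fun _ ha => by rw [stdVec_eq_zero ha, ite_self]) a

lemma repUnit_mul_repUnit (i j : ℤ) :
    repUnit k n i * repUnit k n j = if i = j then repUnit k n i else 0 :=
  ext_stdVec fun a _ => by
    rw [Module.End.mul_apply, repUnit_stdVec]
    split_ifs <;> simp_all [repUnit_stdVec]

lemma sum_repUnit : ∑ i ∈ Xset n, repUnit k n i = 1 :=
  ext_stdVec fun a ha => by
    simp only [LinearMap.sum_apply, repUnit_stdVec, Finset.sum_ite_eq', sub_two_mul_mem_Xset ha,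
      if_true, Module.End.one_apply]

lemma repUnit_eq_zero {i : ℤ} (hi : i ∉ Xset n) : repUnit k n i = 0 :=
  ext_stdVec fun a ha => by
    rw [repUnit_stdVec, if_neg (by rintro rfl; exact hi (sub_two_mul_mem_Xset ha)),
      LinearMap.zero_apply]

lemma repE_mul_repF_sub (hv : v ≠ 0) :
    repE v n * repF k n - repF k n * repE v n = ∑ i ∈ Xset n, qint v i • repUnit k n i :=
  ext_stdVec fun a ha => by
    simp only [LinearMap.sub_apply, Module.End.mul_apply, repE_stdVec, repF_stdVec, map_smul,
      LinearMap.sum_apply, LinearMap.smul_apply, repUnit_stdVec, smul_ite, smul_zero,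
      Finset.sum_ite_eq', sub_two_mul_mem_Xset ha, if_true, Nat.add_sub_cancel,
      schurCoeff_succ hv ha]
    rcases Nat.eq_zero_or_pos a with rfl | hpos
    · simp
    · rw [Nat.sub_add_cancel hpos, add_smul, add_sub_cancel_left]

lemma repE_mul_repUnit (i : ℤ) : repE v n * repUnit k n i = repUnit k n (i + 2) * repE v n :=
  ext_stdVec fun a _ => by
    rw [Module.End.mul_apply, Module.End.mul_apply, repUnit_stdVec, apply_ite (repE v n),
      map_zero, repE_stdVec, map_smul, repUnit_stdVec, smul_ite, smul_zero]
    rcases Nat.eq_zero_or_pos a with rfl | hpos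
    · simp
    · exact if_congr (by omega) rfl rfl

lemma repF_mul_repUnit (i : ℤ) : repF k n * repUnit k n i = repUnit k n (i - 2) * repF k n :=
  ext_stdVec fun a _ => by
    rw [Module.End.mul_apply, Module.End.mul_apply, repUnit_stdVec, apply_ite (repF k n),
      map_zero, repF_stdVec, repUnit_stdVec]
    exact if_congr (by omega) rfl rfl

lemma repUnit_mul_repE (i : ℤ) : repUnit k n i * repE v n = repE v n * repUnit k n (i - 2) :=
  ext_stdVec fun a _ => by
    rw [Module.End.mul_apply, Module.End.mul_apply, repUnit_stdVec, apply_ite (repE v n),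
      map_zero, repE_stdVec, map_smul, repUnit_stdVec, smul_ite, smul_zero]
    rcases Nat.eq_zero_or_pos a with rfl | hpos
    · simp
    · exact if_congr (by omega) rfl rfl

lemma repUnit_mul_repF (i : ℤ) : repUnit k n i * repF k n = repF k n * repUnit k n (i + 2) :=
  ext_stdVec fun a _ => by
    rw [Module.End.mul_apply, Module.End.mul_apply, repUnit_stdVec, apply_ite (repF k n),
      map_zero, repF_stdVec, repUnit_stdVec]
    exact if_congr (by omega) rfl rfl

variable (v n) in
def repGen : SchurGen → Module.End k (Fin (n + 1) → k)
  | SchurGen.E => repE v n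
  | SchurGen.F => repF k n
  | SchurGen.unit i => repUnit k n i

lemma lift_repGen_eq_of_schurRel (hv : v ≠ 0) ⦃x y : FreeAlgebra k SchurGen⦄
    (h : SchurRel k v n x y) :
    FreeAlgebra.lift k (repGen v n) x = FreeAlgebra.lift k (repGen v n) y := by
  induction h with
  | idem i _ j _ => simpa [repGen, apply_ite] using repUnit_mul_repUnit i j
  | sum_one => simpa [repGen] using sum_repUnit
  | unit_zero i hi => simpa [repGen] using repUnit_eq_zero hi
  | comm => simpa [repGen] using repE_mul_repF_sub hv
  | Eu i => simpa [repGen] using repE_mul_repUnit i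
  | Fu i => simpa [repGen] using repF_mul_repUnit i
  | uE i => simpa [repGen] using repUnit_mul_repE i
  | uF i => simpa [repGen] using repUnit_mul_repF i

def schurRep (hv : v ≠ 0) : SchurAlg k v n →ₐ[k] Module.End k (Fin (n + 1) → k) :=
  RingQuot.liftAlgHom k ⟨FreeAlgebra.lift k (repGen v n), lift_repGen_eq_of_schurRel hv⟩

lemma schurRep_weightVec_stdVec_zero (hv : v ≠ 0) (a : ℕ) :
    schurRep hv (weightVec v n a) (stdVec k n 0) = stdVec k n a := by
  induction a with
  | zero =>
    simp only [weightVec_zero, schurRep, Sunit, RingQuot.liftAlgHom_mkAlgHom_apply,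
      FreeAlgebra.lift_ι_apply, repGen, repUnit_stdVec]
    simp
  | succ a ih =>
    rw [← SF_mul_weightVec, map_mul, Module.End.mul_apply, ih]
    simp only [SF, schurRep, RingQuot.liftAlgHom_mkAlgHom_apply, FreeAlgebra.lift_ι_apply, repGen,
      repF_stdVec]

lemma linearIndependent_weightVec (hv : v ≠ 0) :
    LinearIndependent k fun a : Fin (n + 1) => weightVec v n a := by
  refine LinearIndependent.of_comp
    (LinearMap.applyₗ (stdVec k n 0) ∘ₗ (schurRep hv).toLinearMap) ?_
  convert (Pi.basisFun k (Fin (n + 1))).linearIndependent using 1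
  ext1 a
  simp [schurRep_weightVec_stdVec_zero, stdVec_val]

end Representation

section Module

variable {v : k} {n : ℕ}

def weightBasis (hv : v ≠ 0) :
    Module.Basis (Fin (n + 1)) k ((Ideal.span {Sunit k v n n}).restrictScalars k) :=
  (Module.Basis.span (linearIndependent_weightVec hv)).map
    (LinearEquiv.ofEq _ _ (restrictScalars_span_Sunit hv).symm)

lemma weightBasis_apply (hv : v ≠ 0) (a : Fin (n + 1)) :
    (weightBasis hv a : SchurAlg k v n) = weightVec v n a := by
  rw [weightBasis, Module.Basis.map_apply, Module.Basis.span_apply]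
  rfl

lemma Sunit_mul_sum_smul_weightVec (c : Fin (n + 1) → k) (a : Fin (n + 1)) :
    Sunit k v n (n - 2 * (a : ℕ)) * ∑ b, c b • weightVec v n b = c a • weightVec v n a := by
  have hweight : ∀ b : Fin (n + 1), (n : ℤ) - 2 * (a : ℕ) = n - 2 * (b : ℕ) ↔ a = b :=
    fun b => by rw [Fin.ext_iff]; omega
  simp_rw [Finset.mul_sum, mul_smul_comm, Sunit_mul_weightVec, hweight, smul_ite, smul_zero,
    Fintype.sum_ite_eq]

lemma exists_mul_eq_Sunit (hv : v ≠ 0) (hfact : qfact v n ≠ 0) {w : SchurAlg k v n}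
    (hw : w ∈ Ideal.span {Sunit k v n n}) (hw0 : w ≠ 0) : ∃ s, s * w = Sunit k v n n := by
  rw [← Submodule.restrictScalars_mem k, restrictScalars_span_Sunit hv, weightSpan,
    Submodule.mem_span_range_iff_exists_fun] at hw
  obtain ⟨c, rfl⟩ := hw
  obtain ⟨a, hca⟩ : ∃ a, c a ≠ 0 := by
    by_contra! hc
    simp [hc] at hw0
  have hP : ∏ j ∈ Finset.range a, schurCoeff v n (j + 1) ≠ 0 :=
    Finset.prod_ne_zero_iff.mpr fun j hj =>
      schurCoeff_ne_zero hfact j.succ_pos (by have := Finset.mem_range.mp hj; omega)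
  refine ⟨(c a * ∏ j ∈ Finset.range a, schurCoeff v n (j + 1))⁻¹ •
    (SE k v n ^ (a : ℕ) * Sunit k v n (n - 2 * (a : ℕ))), ?_⟩
  rw [smul_mul_assoc, mul_assoc, Sunit_mul_sum_smul_weightVec, mul_smul_comm,
    SE_pow_mul_weightVec hv (Nat.lt_succ_iff.mp a.2), smul_smul, smul_smul, mul_assoc,
    inv_mul_cancel₀ (mul_ne_zero hca hP), one_smul]

end Module

/-- the left ideal `V(n) = S(n)1_n`: basis, dimension, action of the
generators, and simplicity when `[n]! ≠ 0`. -/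
theorem stmt_1 (k : Type*) [Field k] (v : k) (hv : v ≠ 0) (n : ℕ) :
    (∃ b : Module.Basis (Fin (n + 1)) k
        ((Ideal.span {Sunit k v n (n : ℤ)}).restrictScalars k),
      ∀ a : Fin (n + 1),
        (b a : SchurAlg k v n) = SF k v n ^ (a : ℕ) * Sunit k v n (n : ℤ)) ∧
    Module.finrank k ((Ideal.span {Sunit k v n (n : ℤ)}).restrictScalars k) = n + 1 ∧
    (∀ a : ℕ, a < n →
      SF k v n * (SF k v n ^ a * Sunit k v n (n : ℤ)) =
        SF k v n ^ (a + 1) * Sunit k v n (n : ℤ)) ∧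
    SF k v n * (SF k v n ^ n * Sunit k v n (n : ℤ)) = 0 ∧
    (∀ a : ℕ, 0 < a → a ≤ n →
      SE k v n * (SF k v n ^ a * Sunit k v n (n : ℤ)) =
        (qint v ((n : ℤ) - (a : ℤ) + 1) * qint v (a : ℤ)) •
          (SF k v n ^ (a - 1) * Sunit k v n (n : ℤ))) ∧
    SE k v n * (SF k v n ^ 0 * Sunit k v n (n : ℤ)) = 0 ∧
    (∀ i ∈ Xset n, ∀ a : ℕ, a ≤ n →
      Sunit k v n i * (SF k v n ^ a * Sunit k v n (n : ℤ)) =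
        if i = (n : ℤ) - 2 * (a : ℤ) then SF k v n ^ a * Sunit k v n (n : ℤ) else 0) ∧
    (qfact v n ≠ 0 →
      IsSimpleModule (SchurAlg k v n) (Ideal.span {Sunit k v n (n : ℤ)})) := by
  refine ⟨⟨weightBasis hv, weightBasis_apply hv⟩, ?_, fun a _ => SF_mul_weightVec a,
    ?_, fun a _ ha => SE_mul_weightVec hv ha, ?_, fun i _ a _ => Sunit_mul_weightVec i a,
    fun hfact => ?_⟩
  · rw [Module.finrank_eq_card_basis (weightBasis hv), Fintype.card_fin]
  · exact (SF_mul_weightVec n).trans (weightVec_eq_zero n.lt_succ_self)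
  · simpa using SE_mul_weightVec hv n.zero_le
  · refine Ideal.isSimpleModule_span_singleton ?_ fun w => exists_mul_eq_Sunit hv hfact
    simpa using (linearIndependent_weightVec hv (n := n)).ne_zero 0
end
end

section
/- The operators ė_1, …, ė_{n−1} on V^{⊗n} satisfy the Temperley–Lieb relations with parameter δ = −(v + v^{−1}): ė_i² = −(v + v^{−1}) ė_i for all i; ė_i ė_j ė_i = ė_i whenever |i − j| = 1; and ė_i ė_j = ė_j ė_i whenever |i − j| > 1. -/
noncomputable section
attribute [local instance] Classical.propDecidable

/-- The `n`-th tensor power of `V = k²`, realized as coordinate functions with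
respect to the basis `y_i`, `i ∈ {1,-1}ⁿ` (here `true ↔ 1`, `false ↔ -1`). -/
abbrev Tn (k : Type*) [Field k] (n : ℕ) := (Fin n → Bool) → k

/-- The sign of an index entry: `true ↦ 1`, `false ↦ -1`. -/
def sgn (b : Bool) : ℤ := if b then 1 else -1

/-- The weight `i₁ + ⋯ + i_n` of a basis index. -/
def wt {n : ℕ} (i : Fin n → Bool) : ℤ := ∑ t, sgn (i t)

variable {k : Type*} [Field k]

/-- The operator `E` on `V^{⊗n}`. -/
def Eop (v : k) (n : ℕ) : Tn k n →ₗ[k] Tn k n where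
  toFun f := fun i =>
    ∑ j ∈ Finset.univ.filter (fun j => i j = true),
      v ^ (∑ t ∈ Finset.univ.filter (fun t => t < j), sgn (i t)) * f (Function.update i j false)
  map_add' f g := by
    funext i
    simp [Pi.add_apply, mul_add, Finset.sum_add_distrib]
  map_smul' c f := by
    funext i
    simp only [Pi.smul_apply, smul_eq_mul, RingHom.id_apply]
    rw [Finset.mul_sum]
    exact Finset.sum_congr rfl fun j _ => by ring

/-- The operator `F` on `V^{⊗n}`. -/
def Fop (v : k) (n : ℕ) : Tn k n →ₗ[k] Tn k n where
  toFun f := fun i =>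
    ∑ j ∈ Finset.univ.filter (fun j => i j = false),
      v ^ (-(∑ t ∈ Finset.univ.filter (fun t => j < t), sgn (i t))) * f (Function.update i j true)
  map_add' f g := by
    funext i
    simp [Pi.add_apply, mul_add, Finset.sum_add_distrib]
  map_smul' c f := by
    funext i
    simp only [Pi.smul_apply, smul_eq_mul, RingHom.id_apply]
    rw [Finset.mul_sum]
    exact Finset.sum_congr rfl fun j _ => by ring

/-- The operator `K` on `V^{⊗n}`. -/
def Kop (v : k) (n : ℕ) : Tn k n →ₗ[k] Tn k n where
  toFun f := fun i => v ^ (wt i) * f i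
  map_add' f g := by
    funext i
    simp [Pi.add_apply, mul_add]
  map_smul' c f := by
    funext i
    simp only [Pi.smul_apply, smul_eq_mul, RingHom.id_apply]
    ring

/-- The symmetric bilinear form on `V^{⊗n}` making the `y_i` orthonormal. -/
def form {n : ℕ} (f g : Tn k n) : k := ∑ i, f i * g i

/-- Tensoring on the right with the basis vector `y₁` (if `b = true`) or `y₋₁`
(if `b = false`). -/
def tensY {n : ℕ} (b : Bool) (f : Tn k n) : Tn k (n + 1) :=
  fun i => if i (Fin.last n) = b then f (fun t => i t.castSucc) else 0

/-- `Φ₁(b) = b ⊗ y₁`. -/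
def Phi1 {n : ℕ} (f : Tn k n) : Tn k (n + 1) := tensY true f

/-- `Φ₂(b) = [w] b ⊗ y₋₁ − v^w (F b) ⊗ y₁`, where `w` is the weight of `b`. -/
def Phi2 (v : k) {n : ℕ} (w : ℤ) (f : Tn k n) : Tn k (n + 1) :=
  qint v w • tensY false f - v ^ w • tensY true (Fop v n f)

/-- A `1`-factor: all partial sums are nonnegative. -/
def IsOneFactor {n : ℕ} (α : Fin n → Bool) : Prop :=
  ∀ j : Fin n, 0 ≤ ∑ t ∈ Finset.univ.filter (fun t => t ≤ j), sgn (α t)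

/-- The orthogonal maximal vectors `Ω(α)`, defined recursively. -/
def Omega (v : k) : (n : ℕ) → (Fin n → Bool) → Tn k n
  | 0, _ => fun _ => 1
  | n + 1, α =>
      if α (Fin.last n) = true then Phi1 (Omega v n fun t => α t.castSucc)
      else Phi2 v (wt fun t => α t.castSucc) (Omega v n fun t => α t.castSucc)

/-- Exchanging the entries of an index at two positions. -/
def swapPair {n : ℕ} (a b : Fin n) (i : Fin n → Bool) : Fin n → Bool :=
  fun t => if t = a then i b else if t = b then i a else i t

/-- The Temperley--Lieb operator `ė` acting on tensor positions `a` and `b`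
(intended: `b = a + 1`). -/
def eop (v : k) {n : ℕ} (a b : Fin n) : Tn k n →ₗ[k] Tn k n where
  toFun f := fun i =>
    if i a = true ∧ i b = false then -v⁻¹ * f i + f (swapPair a b i)
    else if i a = false ∧ i b = true then f (swapPair a b i) - v * f i
    else 0
  map_add' f g := by
    funext i
    simp only [Pi.add_apply]
    split_ifs <;> ring
  map_smul' c f := by
    funext i
    simp only [Pi.smul_apply, smul_eq_mul, RingHom.id_apply]
    split_ifs <;> ring

/-- The partial sum `α₁ + ⋯ + α_{q-1}` of the entries before position `q`. -/
def prefSum {n : ℕ} (α : Fin n → Bool) (q : Fin n) : ℤ :=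
  ∑ t ∈ Finset.univ.filter (fun t => t < q), sgn (α t)

/-- `(i, j)` is a pair of `α`: `α_i = 1` and `j` is the least index `> i` with
`α_i + ⋯ + α_j = 0`. -/
def PairedAt {n : ℕ} (α : Fin n → Bool) (i j : Fin n) : Prop :=
  α i = true ∧ i < j ∧ (∑ t ∈ Finset.Icc i j, sgn (α t)) = 0 ∧
    ∀ j' : Fin n, i < j' → j' < j → (∑ t ∈ Finset.Icc i j', sgn (α t)) ≠ 0

/-- An index is a defect if it belongs to no pair. -/
def IsDefect {n : ℕ} (α : Fin n → Bool) (i : Fin n) : Prop :=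
  (∀ j, ¬ PairedAt α i j) ∧ (∀ j, ¬ PairedAt α j i)

/-- `γ ∈ S(α)`: `γ` is obtained from `α` by negating both entries of each pair
in some subset of the pairs of `α`. -/
def InS {n : ℕ} (α γ : Fin n → Bool) : Prop :=
  (∀ i, IsDefect α i → γ i = α i) ∧
  (∀ i j, PairedAt α i j → (γ i = α i ∧ γ j = α j) ∨ (γ i = !α i ∧ γ j = !α j))

/-- `σ(α, γ)`: the number of pairs of `α` negated to obtain `γ`. -/
def sigmaCount {n : ℕ} (α γ : Fin n → Bool) : ℕ :=
  Nat.card {p : Fin n × Fin n // PairedAt α p.1 p.2 ∧ γ p.1 ≠ α p.1}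

/-- The natural (cellular) vectors `N(α) = Σ_{γ ∈ S(α)} (−v)^{σ(α,γ)} y_γ`,
written in coordinates. -/
def Nvec (v : k) (n : ℕ) (α : Fin n → Bool) : Tn k n :=
  fun γ => if InS α γ then (-v) ^ (sigmaCount α γ) else 0

/-- `β^{(j)}` (0-indexed `j`): change the entry of `β` at the position of its
`(j+1)`-st defect (0-indexed: defect number `j`) to `−1`. -/
def linkDefect {m : ℕ} (β : Fin m → Bool) (j : ℕ) : Fin m → Bool :=
  match (Finset.sort (Finset.univ.filter (fun i => IsDefect β i)) (· ≤ ·))[j]? with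
  | some q => Function.update β q false
  | none => β

/-! Each `ė` only looks at two tensor positions, so every relation is an identity between
coordinate functions that is checked by splitting on the entries of the index at the (at most
four) positions involved; swaps of disjoint pairs of positions commute. -/

section TemperleyLieb

variable {n : ℕ}

lemma eop_apply (v : k) (a b : Fin n) (f : Tn k n) (i : Fin n → Bool) :
    eop v a b f i =
      if i a = true ∧ i b = false then -v⁻¹ * f i + f (swapPair a b i)
      else if i a = false ∧ i b = true then f (swapPair a b i) - v * f i
      else 0 := rfl

@[simp]
lemma swapPair_apply_left (a b : Fin n) (i : Fin n → Bool) : swapPair a b i a = i b := by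
  simp [swapPair]

lemma swapPair_apply_right {a b : Fin n} (h : b ≠ a) (i : Fin n → Bool) :
    swapPair a b i b = i a := by
  simp [swapPair, h]

lemma swapPair_apply_of_ne {a b c : Fin n} (hca : c ≠ a) (hcb : c ≠ b) (i : Fin n → Bool) :
    swapPair a b i c = i c := by
  simp [swapPair, hca, hcb]

@[simp]
lemma swapPair_swapPair (a b : Fin n) (i : Fin n → Bool) :
    swapPair a b (swapPair a b i) = i := by
  funext t
  simp only [swapPair]
  split_ifs <;> simp_all

lemma swapPair_comm {a b c d : Fin n} (hca : c ≠ a) (hcb : c ≠ b) (hda : d ≠ a) (hdb : d ≠ b)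
    (i : Fin n → Bool) : swapPair a b (swapPair c d i) = swapPair c d (swapPair a b i) := by
  funext t
  simp only [swapPair]
  split_ifs <;> simp_all

lemma eop_comp_self (v : k) (hv : v ≠ 0) (a b : Fin n) :
    eop v a b ∘ₗ eop v a b = (-(v + v⁻¹)) • eop v a b := by
  ext f i
  obtain rfl | hab := eq_or_ne a b
  · simp [eop_apply]
  simp only [LinearMap.comp_apply, LinearMap.smul_apply, Pi.smul_apply, smul_eq_mul]
  cases ha : i a <;> cases hb : i b <;>
    simp [eop_apply, swapPair_apply_right hab.symm, ha, hb] <;>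
    field_simp <;> ring

lemma eop_comp_eop_comp_eop_left (v : k) (hv : v ≠ 0) {a b c : Fin n}
    (hab : a ≠ b) (hac : a ≠ c) (hbc : b ≠ c) :
    eop v a b ∘ₗ eop v b c ∘ₗ eop v a b = eop v a b := by
  ext f i
  simp only [LinearMap.comp_apply]
  cases ha : i a <;> cases hb : i b <;> cases hc : i c <;>
    simp [eop_apply, swapPair_apply_right hab.symm, swapPair_apply_of_ne hac.symm hbc.symm,
      swapPair_apply_of_ne hab hac, ha, hb, hc] <;>
    field_simp <;> ring

lemma eop_comp_eop_comp_eop_right (v : k) (hv : v ≠ 0) {a b c : Fin n}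
    (hab : a ≠ b) (hac : a ≠ c) (hbc : b ≠ c) :
    eop v b c ∘ₗ eop v a b ∘ₗ eop v b c = eop v b c := by
  ext f i
  simp only [LinearMap.comp_apply]
  cases ha : i a <;> cases hb : i b <;> cases hc : i c <;>
    simp [eop_apply, swapPair_apply_right hab.symm,
      swapPair_apply_right hbc.symm, swapPair_apply_of_ne hac.symm hbc.symm,
      swapPair_apply_of_ne hab hac, ha, hb, hc] <;>
    field_simp <;> ring

lemma eop_comp_eop_comm (v : k) {a b c d : Fin n}
    (hca : c ≠ a) (hcb : c ≠ b) (hda : d ≠ a) (hdb : d ≠ b) :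
    eop v a b ∘ₗ eop v c d = eop v c d ∘ₗ eop v a b := by
  ext f i
  simp only [LinearMap.comp_apply]
  cases ha : i a <;> cases hb : i b <;> cases hc : i c <;> cases hd : i d <;>
    simp [eop_apply, swapPair_apply_of_ne hca hcb,
      swapPair_apply_of_ne hda hdb, swapPair_apply_of_ne hca.symm hda.symm,
      swapPair_apply_of_ne hcb.symm hdb.symm, swapPair_comm hca hcb hda hdb,
      ha, hb, hc, hd] <;>
    ring

end TemperleyLieb

-- Positions are 0-indexed: `ė` acts on tensor factors `i` and `i+1`.
/-- the operators `ė_i` satisfy the Temperley--Lieb relations with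
parameter `δ = -(v + v⁻¹)`.  (Positions are 0-indexed: `ė` acts on tensor
factors `i` and `i+1`.) -/
theorem stmt_8 {k : Type*} [Field k] (v : k) (hv : v ≠ 0) (n : ℕ) :
    (∀ (i : ℕ) (hi : i + 1 < n),
      eop v (⟨i, by omega⟩ : Fin n) ⟨i + 1, hi⟩ ∘ₗ eop v ⟨i, by omega⟩ ⟨i + 1, hi⟩ =
        (-(v + v⁻¹)) • eop v (⟨i, by omega⟩ : Fin n) ⟨i + 1, hi⟩) ∧
    (∀ (i j : ℕ) (hi : i + 1 < n) (hj : j + 1 < n), (i = j + 1 ∨ j = i + 1) →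
      eop v (⟨i, by omega⟩ : Fin n) ⟨i + 1, hi⟩ ∘ₗ eop v ⟨j, by omega⟩ ⟨j + 1, hj⟩ ∘ₗ
          eop v ⟨i, by omega⟩ ⟨i + 1, hi⟩ =
        eop v ⟨i, by omega⟩ ⟨i + 1, hi⟩) ∧
    (∀ (i j : ℕ) (hi : i + 1 < n) (hj : j + 1 < n), (i + 1 < j ∨ j + 1 < i) →
      eop v (⟨i, by omega⟩ : Fin n) ⟨i + 1, hi⟩ ∘ₗ eop v ⟨j, by omega⟩ ⟨j + 1, hj⟩ =
        eop v ⟨j, by omega⟩ ⟨j + 1, hj⟩ ∘ₗ eop v ⟨i, by omega⟩ ⟨i + 1, hi⟩) := by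
  refine ⟨fun i hi => eop_comp_self v hv _ _, ?_, ?_⟩
  · rintro i j hi hj (rfl | rfl)
    · apply eop_comp_eop_comp_eop_right v hv <;> simp only [ne_eq, Fin.ext_iff] <;> omega
    · apply eop_comp_eop_comp_eop_left v hv <;> simp only [ne_eq, Fin.ext_iff] <;> omega
  · intro i j hi hj hij
    apply eop_comp_eop_comm v <;> simp only [ne_eq, Fin.ext_iff] <;> omega
end
end

section
/- If b, b' ∈ V^{⊗m} are weight vectors with b of weight i_b, then ⟨E b, b'⟩ = v^{i_b + 1} ⟨b, F b'⟩. -/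
noncomputable section
attribute [local instance] Classical.propDecidable

variable {k : Type*} [Field k]

/-! Both `⟨E b, b'⟩` and `⟨b, F b'⟩` expand into sums over pairs `(i, j)` with `i_j = -1` of
`b_i b'_{i(j)}`, weighted by `v^{i₁+⋯+i_{j-1}}` and `v^{-(i_{j+1}+⋯+i_n)}` respectively. As
`i_j = -1`, the two exponents differ by `wt i + 1`, which is `w + 1` wherever `b_i ≠ 0`. -/

open Finset Function

def suffSum {n : ℕ} (α : Fin n → Bool) (q : Fin n) : ℤ :=
  ∑ t ∈ univ.filter (fun t => q < t), sgn (α t)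

lemma prefSum_add_sgn_add_suffSum {n : ℕ} (α : Fin n → Bool) (q : Fin n) :
    prefSum α q + sgn (α q) + suffSum α q = wt α := by
  have hsplit := sum_filter_add_sum_filter_not univ (· ≤ q) fun t => sgn (α t)
  simp only [not_le] at hsplit
  rw [prefSum, suffSum, wt, ← hsplit, filter_gt_eq_Iio, filter_lt_eq_Ioi, filter_ge_eq_Iic,
    sum_Iio_add_eq_sum_Iic]

lemma prefSum_update_self {n : ℕ} (α : Fin n → Bool) (q : Fin n) (x : Bool) :
    prefSum (update α q x) q = prefSum α q :=
  sum_congr rfl fun t ht => by rw [update_of_ne (mem_filter.1 ht).2.ne]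

lemma prefSum_eq_of_eq_false {n : ℕ} {α : Fin n → Bool} {q : Fin n} (h : α q = false) :
    prefSum α q = wt α + 1 - suffSum α q := by
  have := prefSum_add_sgn_add_suffSum α q
  rw [h, sgn] at this
  simp only [Bool.false_eq_true, if_false] at this
  omega

lemma sum_filter_eq_true_eq_sum_update {M : Type*} [AddCommMonoid M] {n : ℕ} (j : Fin n)
    (f : (Fin n → Bool) → M) :
    ∑ i ∈ univ.filter (fun i => i j = true), f i
      = ∑ i ∈ univ.filter (fun i => i j = false), f (update i j true) := by
  have update_of_mem {x : Bool} {i : Fin n → Bool} (hi : i ∈ univ.filter (fun i => i j = x))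
      (y : Bool) : update (update i j y) j x = i := by
    rw [update_idem, ← (mem_filter.1 hi).2, update_eq_self]
  refine sum_nbij' (update · j false) (update · j true) (fun i _ => by simp) (fun i _ => by simp)
    (fun i hi => update_of_mem hi _) (fun i hi => update_of_mem hi _) (fun i hi => ?_)
  rw [update_of_mem hi]

lemma form_Eop_eq {n : ℕ} (v : k) (b b' : Tn k n) :
    form (Eop v n b) b' = ∑ j, ∑ i ∈ univ.filter (fun i => i j = false),
      v ^ prefSum i j * b i * b' (update i j true) := by
  calc form (Eop v n b) b'
      = ∑ j : Fin n, ∑ i ∈ univ.filter (fun i => i j = true),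
          v ^ prefSum i j * b (update i j false) * b' i := by
        simp only [form, Eop, LinearMap.coe_mk, AddHom.coe_mk, sum_mul]
        exact sum_comm' fun _ _ => by simp
    _ = _ := by
        refine sum_congr rfl fun j _ => ?_
        rw [sum_filter_eq_true_eq_sum_update]
        refine sum_congr rfl fun i hi => ?_
        rw [prefSum_update_self, update_idem, ← (mem_filter.1 hi).2, update_eq_self]

lemma form_Fop_eq {n : ℕ} (v : k) (b b' : Tn k n) :
    form b (Fop v n b') = ∑ j, ∑ i ∈ univ.filter (fun i => i j = false),
      v ^ (-suffSum i j) * b i * b' (update i j true) := by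
  simp only [form, Fop, LinearMap.coe_mk, AddHom.coe_mk, mul_sum]
  exact (sum_comm' fun _ _ => by simp).trans
    (sum_congr rfl fun j _ => sum_congr rfl fun i _ => by rw [suffSum]; ring)

theorem stmt_10_general {k : Type*} [Field k] (v : k) (hv : v ≠ 0) (n : ℕ)
    (b b' : Tn k n) (w : ℤ) (hbw : ∀ i, b i ≠ 0 → wt i = w) :
    form (Eop v n b) b' = v ^ (w + 1) * form b (Fop v n b') := by
  rw [form_Eop_eq, form_Fop_eq, mul_sum]
  refine sum_congr rfl fun j _ => ?_
  rw [mul_sum]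
  refine sum_congr rfl fun i hi => ?_
  rcases eq_or_ne (b i) 0 with hbi | hbi
  · simp [hbi]
  · rw [prefSum_eq_of_eq_false (mem_filter.1 hi).2, hbw i hbi, sub_eq_add_neg, zpow_add₀ hv]
    ring

/-- adjointness of `E` and `F` with respect to the bilinear form. -/
theorem stmt_10 {k : Type*} [Field k] (v : k) (hv : v ≠ 0) (n : ℕ)
    (b b' : Tn k n) (w : ℤ) (hb0 : b ≠ 0) (hbw : ∀ i, b i ≠ 0 → wt i = w)
    (hb'0 : b' ≠ 0) (hb'w : ∃ w' : ℤ, ∀ i, b' i ≠ 0 → wt i = w') :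
    form (Eop v n b) b' = v ^ (w + 1) * form b (Fop v n b') :=
  stmt_10_general v hv n b b' w hbw
end
end
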